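/- arXiv:1810.05258 — 3 statements merged into one kernel-verified Lean document; each statement's English description precedes it below -/
import Mathlib

section
/- For every natural number k, ∫_0^∞ 2β r e^{-β r²} L_k(β r²)·L_n(β r²) dr = δ_{kn} (orthonormality on (0,∞) under the change of variable x = β r²); in particular ∫_0^∞ e^{-x} L_k(x) L_n(x) dx equals 1 if k = n and 0 otherwise. -/
/-!
Writing `x ^ m * L_n(x)` out and integrating term by term against `e^{-x}` gives
`∑_j (-1)^j C(n,j) (m+j)!/j! = m! · ∑_j (-1)^j C(n,j) C(j+m,m)`. Up to the sign `(-1)^n` this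
alternating sum is the `n`-th forward difference of `j ↦ C(j+m,m)` at `0`, i.e. of `x ↦ C(x,m)`
at `m`, which is `C(m,n)`. Hence `∫ e^{-x} x^m L_n = (-1)^n m! C(m,n)`, and expanding `L_k` as well,
`∫ e^{-x} L_k L_n = (-1)^n ∑_i (-1)^i C(k,i) C(i,n)`, which is `(-1)^{n+k}` times the `k`-th
forward difference of `x ↦ C(x,n)` at `0`, i.e. `δ_{kn}`. The weighted form is the substitution
`x = β r²`.
-/

open MeasureTheory Real Set Finset

/-- The n-th Laguerre polynomial. -/
noncomputable def laguerre (n : ℕ) (x : ℝ) : ℝ :=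
  ∑ k ∈ Finset.range (n + 1), (-1 : ℝ) ^ k * (n.choose k) * x ^ k / (Nat.factorial k)

-- `Δ_[1]^[n]` does not parse: `]^` is lexed as a token of the exterior power notation.
open scoped fwdDiff Nat

theorem sum_range_neg_one_pow_mul_choose_mul_eq_fwdDiff_iter (f : ℕ → ℤ) (n : ℕ) :
    ∑ j ∈ range (n + 1), (-1) ^ j * n.choose j * f j = (-1) ^ n * (Δ_[1])^[n] f 0 := by
  rw [fwdDiff_iter_eq_sum_shift, mul_sum]
  refine sum_congr rfl fun j hj ↦ ?_
  obtain ⟨i, rfl⟩ := Nat.exists_eq_add_of_le (Nat.lt_succ_iff.mp (mem_range.mp hj))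
  simp only [smul_eq_mul, zero_add, Nat.add_sub_cancel_left, pow_add]
  ring_nf
  simp

theorem fwdDiff_iter_choose_apply_self (m n : ℕ) :
    (Δ_[1])^[n] (fun x ↦ x.choose m : ℕ → ℤ) m = m.choose n := by
  rcases le_or_gt n m with hnm | hmn
  · obtain ⟨j, rfl⟩ := Nat.exists_eq_add_of_le hnm
    rw [fwdDiff_iter_choose, Nat.choose_symm_add]
  · obtain ⟨k, rfl⟩ := Nat.exists_eq_add_of_lt hmn
    have hconst := fwdDiff_iter_choose 0 m
    rw [add_zero] at hconst
    rw [Nat.choose_eq_zero_of_lt hmn, add_assoc, add_comm, Function.iterate_add_apply,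
      Function.iterate_succ_apply, hconst]
    simp [fwdDiff_iter_eq_sum_shift]

theorem alternating_sum_range_choose_mul_add_choose (m n : ℕ) :
    ∑ j ∈ range (n + 1), (-1 : ℤ) ^ j * n.choose j * (j + m).choose m = (-1) ^ n * m.choose n := by
  have hshift := fwdDiff_iter_comp_add 1 (fun x ↦ (x.choose m : ℤ)) m n 0
  rw [zero_add, fwdDiff_iter_choose_apply_self] at hshift
  rw [sum_range_neg_one_pow_mul_choose_mul_eq_fwdDiff_iter (fun j ↦ ((j + m).choose m : ℤ)),
    ← hshift]

theorem alternating_sum_range_choose_mul_choose (k n : ℕ) :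
    ∑ i ∈ range (k + 1), (-1 : ℤ) ^ i * k.choose i * i.choose n =
      if k = n then (-1) ^ n else 0 := by
  rw [sum_range_neg_one_pow_mul_choose_mul_eq_fwdDiff_iter (fun i ↦ (i.choose n : ℤ)),
    fwdDiff_iter_choose_zero]
  split_ifs with h <;> simp [h]

theorem integrableOn_exp_neg_mul_pow (m : ℕ) :
    IntegrableOn (fun x : ℝ ↦ exp (-x) * x ^ m) (Ioi 0) :=
  (GammaIntegral_convergent (s := m + 1) (by positivity)).congr_fun
    (fun x _ ↦ by simp [← rpow_natCast]) measurableSet_Ioi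

theorem integral_exp_neg_mul_pow (m : ℕ) : ∫ x in Ioi (0 : ℝ), exp (-x) * x ^ m = m ! := by
  rw [← Gamma_nat_eq_factorial, Gamma_eq_integral (by positivity)]
  exact setIntegral_congr_fun measurableSet_Ioi fun x _ ↦ by simp [← rpow_natCast]

theorem integrableOn_exp_neg_mul_sum_pow {ι : Type*} (s : Finset ι) (c : ι → ℝ) (e : ι → ℕ) :
    IntegrableOn (fun x : ℝ ↦ exp (-x) * ∑ i ∈ s, c i * x ^ e i) (Ioi 0) := by
  simp_rw [mul_sum, mul_left_comm (exp _)]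
  exact integrable_finsetSum _ fun i _ ↦ (integrableOn_exp_neg_mul_pow (e i)).const_mul (c i)

theorem integral_exp_neg_mul_sum_pow {ι : Type*} (s : Finset ι) (c : ι → ℝ) (e : ι → ℕ) :
    ∫ x in Ioi (0 : ℝ), exp (-x) * ∑ i ∈ s, c i * x ^ e i = ∑ i ∈ s, c i * (e i)! := by
  simp_rw [mul_sum, mul_left_comm (exp _)]
  rw [integral_finsetSum _ fun i _ ↦ (integrableOn_exp_neg_mul_pow (e i)).const_mul (c i)]
  simp_rw [integral_const_mul, integral_exp_neg_mul_pow]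

theorem integral_Ioi_comp_const_mul_sq {E : Type*} [NormedAddCommGroup E] [NormedSpace ℝ E]
    (g : ℝ → E) {β : ℝ} (hβ : 0 < β) :
    ∫ r in Ioi (0 : ℝ), (2 * β * r) • g (β * r ^ 2) = ∫ x in Ioi 0, g x := by
  have hsq := integral_comp_rpow_Ioi_of_pos (g := fun y ↦ g (β * y)) two_pos
  norm_num [rpow_two] at hsq
  have hscale := integral_comp_mul_left_Ioi' g 0 hβ
  rw [mul_zero] at hscale
  rw [← hscale, ← hsq, ← integral_smul]
  congr 1 with r
  rw [smul_smul]
  ring_nf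

theorem laguerre_eq_sum (n : ℕ) (x : ℝ) :
    laguerre n x = ∑ j ∈ range (n + 1), (-1) ^ j * n.choose j / j ! * x ^ j :=
  sum_congr rfl fun j _ ↦ by ring

theorem pow_mul_laguerre (m n : ℕ) (x : ℝ) :
    x ^ m * laguerre n x = ∑ j ∈ range (n + 1), (-1) ^ j * n.choose j / j ! * x ^ (j + m) := by
  simp_rw [laguerre, mul_sum, pow_add]
  exact sum_congr rfl fun j _ ↦ by ring

theorem integral_exp_neg_mul_pow_mul_laguerre (m n : ℕ) :
    ∫ x in Ioi (0 : ℝ), exp (-x) * (x ^ m * laguerre n x) = (-1) ^ n * m ! * m.choose n := by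
  have hfact (j : ℕ) : ((j + m)! : ℝ) / j ! = m ! * (j + m).choose m := by
    rw [← Nat.add_choose_mul_factorial_mul_factorial j m]
    field_simp
    push_cast
    ring
  simp_rw [pow_mul_laguerre, integral_exp_neg_mul_sum_pow]
  calc _ = (m ! : ℝ) *
        ((∑ j ∈ range (n + 1), (-1 : ℤ) ^ j * n.choose j * (j + m).choose m : ℤ) : ℝ) := by
        push_cast
        rw [mul_sum]
        refine sum_congr rfl fun j _ ↦ ?_
        rw [div_mul_eq_mul_div, mul_div_assoc, hfact]
        ring
    _ = _ := by
        rw [alternating_sum_range_choose_mul_add_choose]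
        push_cast
        ring

theorem integral_exp_neg_mul_laguerre_mul_laguerre (k n : ℕ) :
    ∫ x in Ioi (0 : ℝ), exp (-x) * laguerre k x * laguerre n x = if k = n then 1 else 0 := by
  have hexpand (x : ℝ) : exp (-x) * laguerre k x * laguerre n x =
      ∑ i ∈ range (k + 1), (-1) ^ i * k.choose i / i ! * (exp (-x) * (x ^ i * laguerre n x)) := by
    rw [laguerre_eq_sum k, mul_sum, sum_mul]
    exact sum_congr rfl fun i _ ↦ by ring
  have hint (i : ℕ) : IntegrableOn (fun x ↦ exp (-x) * (x ^ i * laguerre n x)) (Ioi 0) := by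
    simp_rw [pow_mul_laguerre]
    exact integrableOn_exp_neg_mul_sum_pow _ _ _
  simp_rw [hexpand]
  rw [integral_finsetSum _ fun i _ ↦ (hint i).const_mul _]
  simp_rw [integral_const_mul, integral_exp_neg_mul_pow_mul_laguerre]
  calc _ = (-1) ^ n * ((∑ i ∈ range (k + 1), (-1 : ℤ) ^ i * k.choose i * i.choose n : ℤ) : ℝ) := by
        push_cast
        rw [mul_sum]
        refine sum_congr rfl fun i _ ↦ ?_
        field_simp
    _ = _ := by
        rw [alternating_sum_range_choose_mul_choose]
        split_ifs <;> simp [← mul_pow]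

/-- Orthonormality of the Laguerre polynomials, both in the weighted form on (0,∞)
after the change of variable x = β r², and in the standard form. -/
theorem laguerre_orthonormal (β : ℝ) (hβ : 0 < β) (k n : ℕ) :
    (∫ r in Ioi (0 : ℝ),
        2 * β * r * Real.exp (-β * r ^ 2) * laguerre k (β * r ^ 2) * laguerre n (β * r ^ 2)) =
      (if k = n then (1 : ℝ) else 0) ∧
    (∫ x in Ioi (0 : ℝ), Real.exp (-x) * laguerre k x * laguerre n x) =
      (if k = n then (1 : ℝ) else 0) := by
  have hstd := integral_exp_neg_mul_laguerre_mul_laguerre k n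
  refine ⟨?_, hstd⟩
  rw [← hstd, ← integral_Ioi_comp_const_mul_sq (fun x ↦ exp (-x) * laguerre k x * laguerre n x) hβ]
  congr 1 with r
  rw [smul_eq_mul, neg_mul]
  ring
end

section
/- For natural numbers n and l, ∫_0^∞ t^l e^{-t} L_n(t) dt = (-1)^n C(l, n) l! if n ≤ l, and equals 0 if n > l. -/
/-!
Since `∫₀^∞ t^m e^{-t} dt = m!`, the integral equals
`∑ₖ (-1)^k C(n,k) (l+k)!/k! = l! ∑ₖ (-1)^k C(n,k) C(k+l,l)`.
Up to the sign `(-1)^n`, this alternating sum is the `n`-th forward difference of `x ↦ C(x,l)`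
at `x = l`; as `Δ C(x,j+1) = C(x,j)`, it equals `C(l,l-n)` for `n ≤ l` and vanishes for `n > l`.
-/

open MeasureTheory Real Set Finset

open Function fwdDiff

theorem fwdDiff_iter_choose_eq_ite (l n : ℕ) :
    (Δ_[1])^[n] (fun x ↦ x.choose l : ℕ → ℤ) =
      fun x ↦ if n ≤ l then (x.choose (l - n) : ℤ) else 0 := by
  by_cases hnl : n ≤ l
  · obtain ⟨j, rfl⟩ := Nat.exists_eq_add_of_le hnl
    simp [fwdDiff_iter_choose]
  · obtain ⟨k, rfl⟩ := Nat.exists_eq_add_of_lt (not_le.mp hnl)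
    have hconst : (Δ_[1])^[l] (fun x ↦ x.choose l : ℕ → ℤ) = fun _ ↦ 1 := by
      simpa using fwdDiff_iter_choose 0 l
    simp only [hnl, if_false]
    rw [add_assoc, add_comm, iterate_add_apply, iterate_succ_apply, hconst, fwdDiff_const]
    exact iterate_fixed (fwdDiff_const 1 0) k

theorem neg_one_pow_eq_neg_one_pow_mul_neg_one_pow_sub {R : Type*} [Monoid R] [HasDistribNeg R]
    {k n : ℕ} (hk : k ≤ n) : (-1 : R) ^ k = (-1) ^ n * (-1) ^ (n - k) := by
  obtain ⟨j, rfl⟩ := Nat.exists_eq_add_of_le hk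
  rw [Nat.add_sub_cancel_left, pow_add, mul_assoc, ← pow_add, ← two_mul, pow_mul, neg_one_sq,
    one_pow, mul_one]

theorem sum_range_neg_one_pow_mul_choose_mul_add_choose (n l : ℕ) :
    ∑ k ∈ range (n + 1), (-1 : ℤ) ^ k * n.choose k * (k + l).choose l =
      if n ≤ l then (-1 : ℤ) ^ n * l.choose n else 0 := by
  calc _ = (-1) ^ n * (Δ_[1])^[n] (fun x ↦ (x.choose l : ℤ)) l := by
        rw [fwdDiff_iter_eq_sum_shift, mul_sum]
        refine sum_congr rfl fun k hk ↦ ?_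
        rw [neg_one_pow_eq_neg_one_pow_mul_neg_one_pow_sub (Nat.le_of_lt_succ (mem_range.mp hk)),
          smul_eq_mul, smul_eq_mul, mul_one, add_comm]
        ring
    _ = _ := by
        rw [fwdDiff_iter_choose_eq_ite]
        split_ifs with hnl
        · exact congrArg _ (congrArg _ (Nat.choose_symm hnl))
        · rw [mul_zero]

theorem integral_pow_mul_exp_neg (m : ℕ) :
    ∫ t in Ioi (0 : ℝ), t ^ m * exp (-t) = m.factorial := by
  rw [← Real.Gamma_nat_eq_factorial, Real.Gamma_eq_integral (by positivity)]
  refine setIntegral_congr_fun measurableSet_Ioi fun t _ ↦ ?_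
  rw [add_sub_cancel_right, Real.rpow_natCast, mul_comm]

theorem integrableOn_pow_mul_exp_neg (m : ℕ) :
    IntegrableOn (fun t : ℝ ↦ t ^ m * exp (-t)) (Ioi 0) := by
  refine (Real.GammaIntegral_convergent (s := m + 1) (by positivity)).congr_fun
    (fun t _ ↦ ?_) measurableSet_Ioi
  beta_reduce
  rw [add_sub_cancel_right, Real.rpow_natCast, mul_comm]

theorem integral_pow_mul_exp_neg_mul_sum (l : ℕ) (s : Finset ℕ) (a : ℕ → ℝ) :
    ∫ t in Ioi (0 : ℝ), t ^ l * exp (-t) * ∑ k ∈ s, a k * t ^ k =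
      ∑ k ∈ s, a k * (l + k).factorial := by
  have hexpand : ∀ t : ℝ, t ^ l * exp (-t) * ∑ k ∈ s, a k * t ^ k =
      ∑ k ∈ s, a k * (t ^ (l + k) * exp (-t)) :=
    fun t ↦ by rw [mul_sum]; exact sum_congr rfl fun k _ ↦ by ring
  simp_rw [hexpand]
  rw [integral_finsetSum _ fun k _ ↦ (integrableOn_pow_mul_exp_neg (l + k)).const_mul (a k)]
  simp_rw [integral_const_mul, integral_pow_mul_exp_neg]

/-- ∫_0^∞ t^l e^{-t} L_n(t) dt = (-1)^n C(l,n) l! for n ≤ l, and 0 for n > l. -/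
theorem integral_pow_exp_laguerre (n l : ℕ) :
    (∫ t in Ioi (0 : ℝ), t ^ l * Real.exp (-t) * laguerre n t) =
      if n ≤ l then (-1 : ℝ) ^ n * (l.choose n) * (Nat.factorial l) else 0 := by
  have hlaguerre : laguerre n =
      fun t ↦ ∑ k ∈ range (n + 1), (-1 : ℝ) ^ k * n.choose k / k.factorial * t ^ k := by
    ext t
    exact sum_congr rfl fun k _ ↦ by ring
  have hterm : ∀ k, (-1 : ℝ) ^ k * n.choose k / k.factorial * (l + k).factorial =
      l.factorial * (((-1 : ℤ) ^ k * n.choose k * (k + l).choose l : ℤ) : ℝ) := by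
    intro k
    rw [add_comm l k, ← Nat.add_choose_mul_factorial_mul_factorial]
    push_cast
    field_simp
  rw [hlaguerre, integral_pow_mul_exp_neg_mul_sum]
  simp_rw [hterm]
  rw [← mul_sum, ← Int.cast_sum, sum_range_neg_one_pow_mul_choose_mul_add_choose]
  split_ifs <;> push_cast <;> ring
end

section
/- Kummer's transformation: for real a, b (with b not a nonpositive integer) and all real t, ₁F₁(a; b; t) = e^t · ₁F₁(b−a; b; −t), where ₁F₁(a;b;t) = ∑_{n=0}^∞ (a)_n t^n / ((b)_n n!). -/
/-!
In the Cauchy product of the series of `eᵗ` and of `₁F₁(b − a; b; −t)`, the coefficient of `tⁿ`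
is `∑ₖ (−1)ᵏ (b − a)ₖ / ((b)ₖ k! (n − k)!)`. Writing `(b)ₙ = (b)ₖ (b + k)ₙ₋ₖ` and
`n! = C(n, k) k! (n − k)!`, its equality with `(a)ₙ / ((b)ₙ n!)` becomes the rising-factorial
identity `(a)ₙ = ∑ₖ C(n, k) (−1)ᵏ (b − a)ₖ (b + k)ₙ₋ₖ`, which is the Chu–Vandermonde identity for
falling factorials at `x = a − b`, `y = b + n − 1`. Both series converge absolutely by the ratio
test, since consecutive terms of `₁F₁` have ratio `(a + n) t / ((b + n)(n + 1)) → 0`.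
-/

open Finset

/-- The confluent hypergeometric series ₁F₁(a; b; t) = ∑ₙ (a)ₙ tⁿ/((b)ₙ n!). -/
noncomputable def F11 (a b t : ℝ) : ℝ :=
  ∑' n : ℕ, (∏ i ∈ Finset.range n, (a + i)) * t ^ n /
    ((∏ i ∈ Finset.range n, (b + i)) * (Nat.factorial n))

open Filter Topology Polynomial

theorem ascPochhammer_smeval_eq_prod_range {R : Type*} [CommSemiring R] (r : R) (n : ℕ) :
    (ascPochhammer ℕ n).smeval r = ∏ i ∈ range n, (r + i) := by
  rw [ascPochhammer_smeval_eq_eval]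
  induction n with
  | zero => simp
  | succ n ih => rw [ascPochhammer_succ_eval, ih, prod_range_succ]

theorem prod_range_add_natCast_eq_sum_antidiagonal {R : Type*} [CommRing R] (x y : R) (n : ℕ) :
    ∏ i ∈ range n, (x + i) = ∑ kl ∈ antidiagonal n, (n.choose kl.1 : R) *
      ((-1) ^ kl.1 * ∏ i ∈ range kl.1, (y - x + i)) * ∏ i ∈ range kl.2, (y + kl.1 + i) := by
  have hdesc (r : R) (m : ℕ) :
      (descPochhammer ℤ m).smeval r = ∏ i ∈ range m, (r - m + 1 + i) := by
    rw [descPochhammer_smeval_eq_ascPochhammer, ascPochhammer_smeval_eq_prod_range]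
  have hneg (m : ℕ) :
      (descPochhammer ℤ m).smeval (x - y) = (-1) ^ m * ∏ i ∈ range m, (y - x + i) := by
    have h := ascPochhammer_smeval_neg_eq_descPochhammer (x - y) m
    rw [neg_sub, ascPochhammer_smeval_eq_prod_range, Int.negOnePow_def, Units.smul_def] at h
    rw [h]
    simp [zsmul_eq_mul, ← mul_assoc, ← mul_pow]
  have h := Ring.descPochhammer_smeval_add n (Commute.all (x - y) (y + n - 1))
  rw [hdesc, sum_congr rfl fun kl _ => by rw [hneg, hdesc]] at h
  calc ∏ i ∈ range n, (x + i) = ∏ i ∈ range n, (x - y + (y + n - 1) - n + 1 + i) :=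
        prod_congr rfl fun i _ => by ring
    _ = _ := h
    _ = _ := by
      refine sum_congr rfl fun kl hkl => ?_
      rw [← mem_antidiagonal.mp hkl, ← mul_assoc]
      congr 1
      refine prod_congr rfl fun i _ => ?_
      push_cast
      ring

namespace F11

noncomputable def term (a b t : ℝ) (n : ℕ) : ℝ :=
  (∏ i ∈ range n, (a + i)) * t ^ n / ((∏ i ∈ range n, (b + i)) * n.factorial)

theorem term_succ (a b t : ℝ) (n : ℕ) :
    term a b t (n + 1) = term a b t n * ((a + n) * t / ((b + n) * (n + 1))) := by
  rw [term, term, prod_range_succ, prod_range_succ, pow_succ, Nat.factorial_succ,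
    div_mul_div_comm]
  push_cast
  ring

theorem tendsto_term_ratio (a b t : ℝ) :
    Tendsto (fun n : ℕ => (a + n) * t / ((b + n) * (n + 1))) atTop (𝓝 0) := by
  have hn : Tendsto (fun n : ℕ => (n : ℝ)) atTop atTop := tendsto_natCast_atTop_atTop
  have h₁ : Tendsto (fun n : ℕ => (a + n) / (n + 1)) atTop (𝓝 1) := by
    have : Tendsto (fun n : ℕ => 1 + (a - 1) / (n + 1)) atTop (𝓝 (1 + 0)) :=
      tendsto_const_nhds.add (tendsto_const_nhds.div_atTop (tendsto_atTop_add_const_right _ 1 hn))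
    refine (this.congr fun n => ?_).trans (by rw [add_zero])
    field_simp
    ring
  have h₂ : Tendsto (fun n : ℕ => t / (b + n)) atTop (𝓝 0) :=
    tendsto_const_nhds.div_atTop (tendsto_atTop_add_const_left _ b hn)
  simpa [div_mul_div_comm, mul_comm] using h₁.mul h₂

theorem summable_norm_term (a b t : ℝ) : Summable fun n => ‖term a b t n‖ := by
  refine summable_of_ratio_norm_eventually_le (r := 1 / 2) (by norm_num) ?_
  filter_upwards [(tendsto_term_ratio a b t).norm.eventually_le_const
    (show ‖(0 : ℝ)‖ < 1 / 2 by norm_num)] with n hn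
  rw [norm_norm, norm_norm, term_succ, norm_mul, mul_comm]
  gcongr

theorem sum_antidiagonal_term_mul_exp_term (a b t : ℝ) (hb : ∀ k : ℕ, b + k ≠ 0) (n : ℕ) :
    ∑ kl ∈ antidiagonal n, term (b - a) b (-t) kl.1 * (t ^ kl.2 / kl.2.factorial) =
      term a b t n := by
  rw [term, prod_range_add_natCast_eq_sum_antidiagonal a b, sum_mul, sum_div]
  refine sum_congr rfl fun kl hkl => ?_
  obtain ⟨k, l⟩ := kl
  obtain rfl : k + l = n := mem_antidiagonal.mp hkl
  dsimp only
  have hsplit : ∏ i ∈ range l, (b + (k + i : ℕ)) = ∏ i ∈ range l, (b + k + i) :=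
    prod_congr rfl fun i _ => by push_cast; ring
  have hbk : ∏ i ∈ range k, (b + i) ≠ 0 := prod_ne_zero_iff.mpr fun i _ => hb i
  have hbkl : ∏ i ∈ range l, (b + k + i) ≠ 0 :=
    hsplit ▸ prod_ne_zero_iff.mpr fun i _ => hb (k + i)
  have hchoose : ((k + l).choose k : ℝ) ≠ 0 := by
    exact_mod_cast (Nat.choose_pos (Nat.le_add_right k l)).ne'
  rw [term, prod_range_add, hsplit,
    ← Nat.choose_mul_factorial_mul_factorial (Nat.le_add_right k l), Nat.add_sub_cancel_left]
  push_cast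
  field_simp
  ring

end F11

/-- Kummer's transformation: ₁F₁(a; b; t) = eᵗ ₁F₁(b−a; b; −t), for b not a
nonpositive integer. -/
theorem kummer_transformation (a b t : ℝ) (hb : ∀ k : ℕ, b + k ≠ 0) :
    F11 a b t = Real.exp t * F11 (b - a) b (-t) := by
  have hexp : Real.exp t = ∑' n : ℕ, t ^ n / n.factorial := by
    rw [Real.exp_eq_exp_ℝ, NormedSpace.exp_eq_tsum_div]
  have hexp_summable : Summable fun n : ℕ => ‖t ^ n / n.factorial‖ := by
    simpa [abs_div] using Real.summable_pow_div_factorial |t|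
  calc F11 a b t = ∑' n, F11.term a b t n := rfl
    _ = ∑' n, ∑ kl ∈ antidiagonal n, F11.term (b - a) b (-t) kl.1 * (t ^ kl.2 / kl.2.factorial) :=
      tsum_congr fun n => (F11.sum_antidiagonal_term_mul_exp_term a b t hb n).symm
    _ = F11 (b - a) b (-t) * Real.exp t := by
      rw [← tsum_mul_tsum_eq_tsum_sum_antidiagonal_of_summable_norm
        (F11.summable_norm_term (b - a) b (-t)) hexp_summable, hexp]
      rfl
    _ = Real.exp t * F11 (b - a) b (-t) := mul_comm _ _
end
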